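/- Let m ≥ 1 and let K_{3,m} be the complete bipartite graph with parts {1,2,3} and {4,…,m+3}. Let s_{ai} ∈ ℝ for a ∈ {1,2,3} and i ∈ {4,…,m+3}, and consider the K_{3,m}-partial matrix with all diagonal entries 1 and entries s_{ai} at the edges. This partial matrix has a positive definite completion if and only if there exist real numbers x, y, z such that for every i ∈ {4,…,m+3} the 4×4 matrix [[1, s_{1i}, s_{2i}, s_{3i}], [s_{1i}, 1, x, y], [s_{2i}, x, 1, z], [s_{3i}, y, z, 1]] is positive definite. -/

import Mathlib

/-!
Necessity is immediate: each pillow is a principal submatrix of any completion. For sufficiency,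
let `A` be the `3 × 3` block on `{1, 2, 3}` determined by `x, y, z`, and complete the remaining
block so that the Schur complement of `A` is diagonal. A symmetric block matrix with positive
definite `A` is positive definite iff its Schur complement is, and Schur complements commute with
passing to principal submatrices that contain `A`; so the `i`-th diagonal entry of that Schur
complement is the Schur complement of `A` in the `i`-th pillow, which is positive.
-/

open Matrix
open scoped ComplexOrder

namespace Matrix

theorem fromBlocks_submatrix_sum_map {l m n o l' m' n' o' α : Type*} (A : Matrix n l α)
    (B : Matrix n m α) (C : Matrix o l α) (D : Matrix o m α) (f : n' → n) (g : o' → o)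
    (f' : l' → l) (g' : m' → m) :
    (fromBlocks A B C D).submatrix (Sum.map f g) (Sum.map f' g') =
      fromBlocks (A.submatrix f f') (B.submatrix f g') (C.submatrix g f') (D.submatrix g g') := by
  ext (i | i) (j | j) <;> rfl

variable {𝕜 n ι : Type*} [RCLike 𝕜] [Fintype n] [DecidableEq n]

theorem posDef_fromBlocks₁₁_iff [Fintype ι] [DecidableEq ι] {A : Matrix n n 𝕜}
    (B : Matrix n ι 𝕜) (D : Matrix ι ι 𝕜) (hA : A.PosDef) :
    (fromBlocks A B Bᴴ D).PosDef ↔ (D - Bᴴ * A⁻¹ * B).PosDef := by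
  let := hA.isUnit.invertible
  have hdet : (fromBlocks A B Bᴴ D).det = A.det * (D - Bᴴ * A⁻¹ * B).det := by
    rw [det_fromBlocks₁₁, invOf_eq_nonsing_inv]
  constructor
  · intro h
    refine ((hA.fromBlocks₁₁ B D).mp h.posSemidef).posDef_iff_det_ne_zero.mpr ?_
    exact right_ne_zero_of_mul (hdet ▸ h.det_pos.ne')
  · intro h
    refine ((hA.fromBlocks₁₁ B D).mpr h.posSemidef).posDef_iff_det_ne_zero.mpr ?_
    rw [hdet]
    exact mul_ne_zero hA.det_pos.ne' h.det_pos.ne'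

theorem posDef_fromBlocks_submatrix_iff [Fintype ι] {κ : Type*} [Fintype κ] [DecidableEq κ]
    {A : Matrix n n 𝕜} (B : Matrix n ι 𝕜) (D : Matrix ι ι 𝕜) (hA : A.PosDef) (g : κ → ι) :
    ((fromBlocks A B Bᴴ D).submatrix (Sum.map id g) (Sum.map id g)).PosDef ↔
      ((D - Bᴴ * A⁻¹ * B).submatrix g g).PosDef := by
  have hschur : (D - Bᴴ * A⁻¹ * B).submatrix g g =
      D.submatrix g g - (B.submatrix id g)ᴴ * A⁻¹ * B.submatrix id g := by
    rw [conjTranspose_submatrix, ← submatrix_id_id A⁻¹, ← submatrix_mul _ _ _ _ _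
      Function.bijective_id, ← submatrix_mul _ _ _ _ _ Function.bijective_id]
    rfl
  rw [fromBlocks_submatrix_sum_map, submatrix_id_id, ← conjTranspose_submatrix,
    posDef_fromBlocks₁₁_iff _ _ hA, hschur]

/-- The `ι`-block is chosen so that the Schur complement of `A` is diagonal: in Gaussian terms,
the `ι`-coordinates are conditionally independent given the `n`-coordinates. -/
noncomputable def diagonalSchurCompletion [DecidableEq ι] (A : Matrix n n 𝕜)
    (B : Matrix n ι 𝕜) :
    Matrix (n ⊕ ι) (n ⊕ ι) 𝕜 :=
  fromBlocks A B Bᴴ (Bᴴ * A⁻¹ * B + diagonal fun i => 1 - (Bᴴ * A⁻¹ * B) i i)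

variable [DecidableEq ι] {A : Matrix n n 𝕜} {B : Matrix n ι 𝕜}

theorem diagonalSchurCompletion_inr_inr (i : ι) :
    diagonalSchurCompletion A B (Sum.inr i) (Sum.inr i) = 1 := by
  simp [diagonalSchurCompletion]

theorem IsHermitian.diagonalSchurCompletion (hA : A.IsHermitian) :
    (diagonalSchurCompletion A B).IsHermitian := by
  have hN : (Bᴴ * A⁻¹ * B).IsHermitian := isHermitian_conjTranspose_mul_mul _ hA.inv
  refine hA.fromBlocks rfl (hN.add (isHermitian_diagonal_of_self_adjoint _ ?_))
  ext i
  simp [hN.apply i i]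

theorem posDef_diagonalSchurCompletion_iff [Fintype ι] (hA : A.PosDef) :
    (diagonalSchurCompletion A B).PosDef ↔ ∀ i : ι,
      ((diagonalSchurCompletion A B).submatrix (Sum.map id fun _ : Unit => i)
        (Sum.map id fun _ : Unit => i)).PosDef := by
  simp only [diagonalSchurCompletion, posDef_fromBlocks_submatrix_iff _ _ hA,
    posDef_fromBlocks₁₁_iff _ _ hA, add_sub_cancel_left, posDef_diagonal_iff,
    submatrix_diagonal _ _ (Function.injective_of_subsingleton _)]
  simp

end Matrix

section Pillow

open Sum

variable {m : ℕ} (s : Fin 3 → Fin m → ℝ)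

def pillow (x y z : ℝ) (i : Fin m) : Matrix (Fin 4) (Fin 4) ℝ :=
  !![1, s 0 i, s 1 i, s 2 i;
     s 0 i, 1, x, y;
     s 1 i, x, 1, z;
     s 2 i, y, z, 1]

theorem pillow_eq_submatrix {S : Matrix (Fin 3 ⊕ Fin m) (Fin 3 ⊕ Fin m) ℝ} (hS : S.IsHermitian)
    (hdiag : ∀ k, S k k = 1) (hs : ∀ a i, S (inl a) (inr i) = s a i) (i : Fin m) :
    pillow s (S (inl 0) (inl 1)) (S (inl 0) (inl 2)) (S (inl 1) (inl 2)) i =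
      S.submatrix (Fin.cons (inr i) inl) (Fin.cons (inr i) inl) := by
  have hsymm : ∀ k l, S l k = S k l := fun k l => by simpa using hS.apply k l
  have hs' : ∀ a, S (inr i) (inl a) = s a i := fun a => (hsymm _ _).trans (hs a i)
  ext a b
  revert a b
  simp [Fin.forall_fin_succ, pillow, hdiag, hs, hs', hsymm (inl 1) (inl 0),
    hsymm (inl 2) (inl 0), hsymm (inl 2) (inl 1)]

theorem pillow_posDef_of_posDef_completion {S : Matrix (Fin 3 ⊕ Fin m) (Fin 3 ⊕ Fin m) ℝ}
    (hS : S.PosDef) (hdiag : ∀ k, S k k = 1) (hs : ∀ a i, S (inl a) (inr i) = s a i)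
    (i : Fin m) :
    (pillow s (S (inl 0) (inl 1)) (S (inl 0) (inl 2)) (S (inl 1) (inl 2)) i).PosDef := by
  rw [pillow_eq_submatrix s hS.isHermitian hdiag hs]
  exact hS.submatrix (Fin.cons_injective_iff.mpr ⟨by simp, inl_injective⟩)

theorem exists_posDef_completion_of_pillow_posDef (hm : 1 ≤ m) {x y z : ℝ}
    (hpillow : ∀ i, (pillow s x y z i).PosDef) :
    ∃ S : Matrix (Fin 3 ⊕ Fin m) (Fin 3 ⊕ Fin m) ℝ, S.PosDef ∧ (∀ k, S k k = 1) ∧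
      ∀ a i, S (inl a) (inr i) = s a i := by
  set A : Matrix (Fin 3) (Fin 3) ℝ := !![1, x, y; x, 1, z; y, z, 1]
  have hA : A.PosDef := by
    have : A = (pillow s x y z ⟨0, hm⟩).submatrix Fin.succ Fin.succ := by
      ext a b; fin_cases a <;> fin_cases b <;> rfl
    exact this ▸ (hpillow _).submatrix (Fin.succ_injective 3)
  set S := diagonalSchurCompletion A (of s)
  have hdiag : ∀ k, S k k = 1 := by
    rintro (a | i)
    · fin_cases a <;> rfl
    · exact diagonalSchurCompletion_inr_inr i
  refine ⟨S, (posDef_diagonalSchurCompletion_iff hA).mpr fun i => ?_, hdiag, fun _ _ => rfl⟩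
  have hpillow_eq :
      pillow s x y z i = S.submatrix (Fin.cons (inr i) inl) (Fin.cons (inr i) inl) :=
    pillow_eq_submatrix s hA.isHermitian.diagonalSchurCompletion hdiag (fun _ _ => rfl) i
  have hemb : (Fin.cons (inr i) inl : Fin 4 → Fin 3 ⊕ Fin m) ∘ Sum.elim Fin.succ (fun _ => 0) =
      Sum.map id fun _ : Unit => i := by
    funext k; rcases k with a | _ <;> rfl
  rw [← hemb, ← submatrix_submatrix, ← hpillow_eq]
  exact (hpillow i).submatrix <| (Fin.succ_injective 3).sumElim
    (Function.injective_of_subsingleton _) fun a _ => Fin.succ_ne_zero a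

end Pillow

theorem K3m_completion_iff_pillows {m : ℕ} (hm : 1 ≤ m) (s : Fin 3 → Fin m → ℝ) :
    (∃ Sigma : Matrix (Fin 3 ⊕ Fin m) (Fin 3 ⊕ Fin m) ℝ, Sigma.PosDef ∧
      (∀ k : Fin 3 ⊕ Fin m, Sigma k k = 1) ∧
      (∀ (a : Fin 3) (i : Fin m), Sigma (Sum.inl a) (Sum.inr i) = s a i)) ↔
    (∃ x y z : ℝ, ∀ i : Fin m,
      (!![1, s 0 i, s 1 i, s 2 i;
          s 0 i, 1, x, y;
          s 1 i, x, 1, z;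
          s 2 i, y, z, 1] : Matrix (Fin 4) (Fin 4) ℝ).PosDef) := by
  constructor
  · rintro ⟨S, hS, hdiag, hs⟩
    exact ⟨_, _, _, pillow_posDef_of_posDef_completion s hS hdiag hs⟩
  · rintro ⟨x, y, z, hpillow⟩
    exact exists_posDef_completion_of_pillow_posDef s hm hpillow
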